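/- Let f : ℝ^d → ℝ be bounded below with inf f := inf_{x∈ℝ^d} f(x), let x₀ ∈ ℝ^d, let n ∈ ℕ, and let Λ : ℝ^d → Sym(n) be a map taking values in symmetric positive semidefinite n×n real matrices. Define the reconditioned level set K := {x ∈ ℝ^d : f(x) ≤ f(x₀) and ‖Λ(x) − I_n‖ ≤ 1/2}, and assume K is closed. Assume: Λ is L_cond-Lipschitz from (ℝ^d, Euclidean norm) to (Sym(n), operator norm); f is twice continuously differentiable on an open set containing K with ⟨v, ∇²f(x)v⟩ ≤ β‖v‖² for all x ∈ K, v ∈ ℝ^d; f is L_f-Lipschitz on K; and ‖∇f(x)‖ ≥ α(f(x) − inf f) for all x ∈ K, where α, β, L_f, L_cond > 0. Let (η_k)_{k≥0} be step sizes with η := inf_k η_k > 0 and sup_k η_k ≤ min{1/β, 1/(2 L_f L_cond)}. Suppose sequences (x_k)_{k≥0} with the given x₀ and (x̃_k)_{k≥0} satisfy, for every k: Λ(x̃_k) = I_n, f(x̃_k) = f(x_k), and x_{k+1} = x̃_k − η_k ∇f(x̃_k). Then f(x_k) − inf f ≤ 2 / (α² η k) for all k ≥ 1. -/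

import Mathlib

/-!
Reconditioning puts each `x̃ₖ` in `K` with `Λ x̃ₖ = 1`, so by the Lipschitz bound on `Λ` every point
of the ball of radius `1 / (2 L_cond)` about `x̃ₖ` with value at most `f x̃ₖ` lies in `K`. Testing the
Lipschitz bound on `f` along `-∇f x̃ₖ` inside this ball gives `‖∇f x̃ₖ‖ ≤ L_f`, so the whole gradient
step stays in the ball; a continuous induction keeps it in `K`, where `β`-smoothness gives the
sufficient decrease `f xₖ₊₁ ≤ f xₖ - ηₖ / 2 ‖∇f x̃ₖ‖²`. With the PL inequality the gap
`aₖ = f xₖ - inf f` satisfies `aₖ₊₁ ≤ aₖ - (α² η / 2) aₖ²`, which forces `aₖ ≤ 2 / (α² η k)`.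
-/

/-- The ℓ²→ℓ² operator norm (largest singular value) of a real matrix. -/
noncomputable def opN {k l : Type*} [Fintype k] [Fintype l] [DecidableEq l]
    (M : Matrix k l ℝ) : ℝ :=
  ‖LinearMap.toContinuousLinearMap (Matrix.toEuclideanLin M)‖

open Set Filter Topology Metric
open scoped Gradient

theorem HasDerivAt.eventually_nhdsGT_lt {φ : ℝ → ℝ} {φ' t : ℝ} (hφ : HasDerivAt φ φ' t)
    (hneg : φ' < 0) : ∀ᶠ s in 𝓝[>] t, φ s < φ t := by
  have hslope : Tendsto (slope φ t) (𝓝[>] t) (𝓝 φ') :=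
    (hasDerivAt_iff_tendsto_slope.1 hφ).mono_left (nhdsGT_le_nhdsNE t)
  filter_upwards [hslope.eventually_lt_const hneg, self_mem_nhdsWithin] with s hs hts
  rw [slope_def_field, div_lt_iff₀ (sub_pos.2 hts), zero_mul] at hs
  linarith

theorem image_le_of_hasDerivAt_le_hasDerivAt {φ φ' B B' : ℝ → ℝ} {a b : ℝ}
    (hφ : ∀ s ∈ Icc a b, HasDerivAt φ (φ' s) s) (hB : ∀ s ∈ Icc a b, HasDerivAt B (B' s) s)
    (ha : φ a ≤ B a) (hle : ∀ s ∈ Icc a b, φ' s ≤ B' s) : ∀ s ∈ Icc a b, φ s ≤ B s :=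
  image_le_of_deriv_right_le_deriv_boundary
    (fun s hs ↦ (hφ s hs).continuousAt.continuousWithinAt)
    (fun s hs ↦ (hφ s (Ico_subset_Icc_self hs)).hasDerivWithinAt) ha
    (fun s hs ↦ (hB s hs).continuousAt.continuousWithinAt)
    (fun s hs ↦ (hB s (Ico_subset_Icc_self hs)).hasDerivWithinAt)
    (fun s hs ↦ hle s (Ico_subset_Icc_self hs))

theorem image_le_add_mul_of_hasDerivAt_le {φ φ' : ℝ → ℝ} {a b C : ℝ}
    (hφ : ∀ s ∈ Icc a b, HasDerivAt φ (φ' s) s) (hC : ∀ s ∈ Icc a b, φ' s ≤ C) :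
    ∀ s ∈ Icc a b, φ s ≤ φ a + C * (s - a) := by
  refine image_le_of_hasDerivAt_le_hasDerivAt hφ (fun s _ ↦ ?_) (by simp) hC
  simpa using ((hasDerivAt_id s).sub_const a).const_mul C |>.const_add (φ a)

theorem image_le_taylor_two_of_hasDerivAt {φ φ' φ'' : ℝ → ℝ} {a b C : ℝ}
    (hφ : ∀ s ∈ Icc a b, HasDerivAt φ (φ' s) s) (hφ' : ∀ s ∈ Icc a b, HasDerivAt φ' (φ'' s) s)
    (hC : ∀ s ∈ Icc a b, φ'' s ≤ C) :
    ∀ s ∈ Icc a b, φ s ≤ φ a + φ' a * (s - a) + C * (s - a) ^ 2 / 2 := by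
  refine image_le_of_hasDerivAt_le_hasDerivAt hφ (fun s _ ↦ ?_) (by simp)
    (image_le_add_mul_of_hasDerivAt_le hφ' hC)
  refine ((((hasDerivAt_id' s).sub_const a).const_mul (φ' a)).const_add (φ a) |>.add
    ((((hasDerivAt_id' s).sub_const a).pow 2).const_mul C |>.div_const 2)).congr_deriv ?_
  norm_num; ring

section Line

variable {E F : Type*} [NormedAddCommGroup E] [NormedSpace ℝ E]
  [NormedAddCommGroup F] [NormedSpace ℝ F]

theorem hasDerivAt_comp_add_smul {g : E → F} {y u : E} {s : ℝ}
    (hg : DifferentiableAt ℝ g (y + s • u)) :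
    HasDerivAt (fun s : ℝ ↦ g (y + s • u)) (fderiv ℝ g (y + s • u) u) s := by
  have hline : HasDerivAt (fun s : ℝ ↦ y + s • u) u s := by
    simpa using ((hasDerivAt_id s).smul_const u).const_add y
  exact hg.hasFDerivAt.comp_hasDerivAt s hline

theorem taylor_two_le_of_fderiv_fderiv_le {f : E → ℝ} {U : Set E} (hU : IsOpen U)
    (hf : ContDiffOn ℝ 2 f U) {y u : E} {t C : ℝ} (ht : 0 ≤ t)
    (hseg : ∀ s ∈ Icc 0 t, y + s • u ∈ U)
    (hC : ∀ s ∈ Icc 0 t, fderiv ℝ (fderiv ℝ f) (y + s • u) u u ≤ C) :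
    fderiv ℝ f (y + t • u) u ≤ fderiv ℝ f y u + C * t ∧
      f (y + t • u) ≤ f y + fderiv ℝ f y u * t + C * t ^ 2 / 2 := by
  have hf' : ContDiffOn ℝ 1 (fderiv ℝ f) U := hf.fderiv_of_isOpen hU (by norm_num)
  have hφ : ∀ s ∈ Icc 0 t, HasDerivAt (fun s : ℝ ↦ f (y + s • u))
      (fderiv ℝ f (y + s • u) u) s := fun s hs ↦
    hasDerivAt_comp_add_smul ((hf.differentiableOn (by norm_num)).differentiableAt
      (hU.mem_nhds (hseg s hs)))
  have hφ' : ∀ s ∈ Icc 0 t, HasDerivAt (fun s : ℝ ↦ fderiv ℝ f (y + s • u) u)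
      (fderiv ℝ (fderiv ℝ f) (y + s • u) u u) s := fun s hs ↦ by
    simpa using (hasDerivAt_comp_add_smul ((hf'.differentiableOn one_ne_zero).differentiableAt
      (hU.mem_nhds (hseg s hs)))).clm_apply (hasDerivAt_const s u)
  have htt : t ∈ Icc 0 t := right_mem_Icc.2 ht
  constructor
  · simpa using image_le_add_mul_of_hasDerivAt_le hφ' hC t htt
  · simpa using image_le_taylor_two_of_hasDerivAt hφ hφ' hC t htt

end Line

section Gradient

variable {E : Type*} [NormedAddCommGroup E] [InnerProductSpace ℝ E] [CompleteSpace E]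
  {f : E → ℝ} {y : E}

theorem hasDerivAt_sub_smul_gradient (hf : DifferentiableAt ℝ f y) :
    HasDerivAt (fun t : ℝ ↦ f (y - t • ∇ f y)) (-‖∇ f y‖ ^ 2) 0 := by
  have h := hasDerivAt_comp_add_smul (s := 0) (u := -∇ f y) (by simpa using hf)
  simpa only [zero_smul, add_zero, smul_neg, ← sub_eq_add_neg, sub_zero, map_neg,
    ← inner_gradient_left, real_inner_self_eq_norm_sq] using h

theorem sq_norm_gradient_le_of_eventually_sub_le (hf : DifferentiableAt ℝ f y) {L : ℝ}
    (h : ∀ᶠ t in 𝓝[>] (0 : ℝ), f y - f (y - t • ∇ f y) ≤ L * (t * ‖∇ f y‖)) :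
    ‖∇ f y‖ ^ 2 ≤ L * ‖∇ f y‖ := by
  have hslope : Tendsto (slope (fun t : ℝ ↦ f (y - t • ∇ f y)) 0) (𝓝[>] 0)
      (𝓝 (-‖∇ f y‖ ^ 2)) :=
    (hasDerivAt_iff_tendsto_slope.1 (hasDerivAt_sub_smul_gradient hf)).mono_left
      (nhdsGT_le_nhdsNE 0)
  have hlow : ∀ᶠ t in 𝓝[>] (0 : ℝ), -(L * ‖∇ f y‖) ≤ slope (fun t : ℝ ↦ f (y - t • ∇ f y)) 0 t := by
    filter_upwards [h, self_mem_nhdsWithin] with t ht (htpos : 0 < t)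
    rw [slope_def_field, le_div_iff₀ (by simpa using htpos)]
    simp only [sub_zero, zero_smul]
    linarith
  linarith [ge_of_tendsto hslope hlow]

variable {K : Set E} {L r : ℝ}

theorem norm_gradient_le_of_lipschitz_of_closedBall_sublevel_subset
    (hf : DifferentiableAt ℝ f y) (hG : ∇ f y ≠ 0) (hy : y ∈ K)
    (hlip : ∀ x ∈ K, ∀ y ∈ K, |f x - f y| ≤ L * ‖x - y‖) (hr : 0 < r)
    (hball : ∀ p ∈ closedBall y r, f p ≤ f y → p ∈ K) : ‖∇ f y‖ ≤ L := by
  have hGpos : 0 < ‖∇ f y‖ := norm_pos_iff.2 hG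
  have hdesc := (hasDerivAt_sub_smul_gradient hf).eventually_nhdsGT_lt
    (neg_lt_zero.2 (by positivity))
  have hnear : ∀ᶠ t in 𝓝[>] (0 : ℝ), t < r / ‖∇ f y‖ :=
    Filter.mem_of_superset (Ioo_mem_nhdsGT (div_pos hr hGpos)) fun _ ht ↦ ht.2
  have hsq := sq_norm_gradient_le_of_eventually_sub_le hf (L := L) <| by
    filter_upwards [hdesc, hnear, self_mem_nhdsWithin] with t hlt htr (ht : 0 < t)
    have hdist : ‖y - t • ∇ f y - y‖ = t * ‖∇ f y‖ := by
      simp [norm_smul, abs_of_pos ht]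
    have hp : y - t • ∇ f y ∈ K := by
      refine hball _ ?_ (by simpa using hlt.le)
      rw [mem_closedBall, dist_eq_norm, hdist]
      exact ((lt_div_iff₀ hGpos).1 htr).le
    have := hlip _ hp y hy
    rw [hdist] at this
    linarith [neg_abs_le (f (y - t • ∇ f y) - f y)]
  nlinarith

variable {U : Set E} {β η : ℝ}

theorem taylor_le_along_neg_gradient (hU : IsOpen U) (hKU : K ⊆ U) (hf : ContDiffOn ℝ 2 f U)
    (hsmooth : ∀ x ∈ K, ∀ v : E, fderiv ℝ (fderiv ℝ f) x v v ≤ β * ‖v‖ ^ 2)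
    (hη : 0 ≤ η) (hηβ : η * β ≤ 1) {t : ℝ} (ht : 0 ≤ t)
    (hseg : ∀ s ∈ Icc 0 t, y + s • -(η • ∇ f y) ∈ K) :
    fderiv ℝ f (y + t • -(η • ∇ f y)) (-(η • ∇ f y)) ≤ -(η * ‖∇ f y‖ ^ 2) * (1 - t) ∧
      f (y + t • -(η • ∇ f y)) ≤ f y - η * ‖∇ f y‖ ^ 2 * t * (1 - t / 2) := by
  obtain ⟨hderiv, hval⟩ := taylor_two_le_of_fderiv_fderiv_le hU hf ht
    (fun s hs ↦ hKU (hseg s hs)) (fun s hs ↦ hsmooth _ (hseg s hs) (-(η • ∇ f y)))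
  have hnorm : ‖-(η • ∇ f y)‖ = η * ‖∇ f y‖ := by simp [norm_smul, abs_of_nonneg hη]
  have hslope : fderiv ℝ f y (-(η • ∇ f y)) = -(η * ‖∇ f y‖ ^ 2) := by
    simp [← inner_gradient_left, inner_smul_right]
  rw [hslope, hnorm] at hderiv hval
  have hηβ' : 0 ≤ 1 - η * β := by linarith
  have hgap₁ : 0 ≤ η * ‖∇ f y‖ ^ 2 * t * (1 - η * β) := by positivity
  have hgap₂ : 0 ≤ η * ‖∇ f y‖ ^ 2 * t ^ 2 * (1 - η * β) := by positivity
  constructor <;> linarith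

theorem gradient_step_le (hK : IsClosed K) (hU : IsOpen U) (hKU : K ⊆ U)
    (hf : ContDiffOn ℝ 2 f U)
    (hsmooth : ∀ x ∈ K, ∀ v : E, fderiv ℝ (fderiv ℝ f) x v v ≤ β * ‖v‖ ^ 2)
    (hlip : ∀ x ∈ K, ∀ y ∈ K, |f x - f y| ≤ L * ‖x - y‖) (hy : y ∈ K) (hr : 0 < r)
    (hball : ∀ p ∈ closedBall y r, f p ≤ f y → p ∈ K)
    (hη : 0 < η) (hηβ : η * β ≤ 1) (hηL : η * L ≤ r) :
    f (y - η • ∇ f y) ≤ f y - η / 2 * ‖∇ f y‖ ^ 2 := by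
  set G := ∇ f y
  rcases eq_or_ne G 0 with hG | hG
  · simp [hG]
  have hdiff : ∀ p ∈ K, DifferentiableAt ℝ f p := fun p hp ↦
    (hf.differentiableOn two_ne_zero).differentiableAt (hU.mem_nhds (hKU hp))
  have hGL : ‖G‖ ≤ L :=
    norm_gradient_le_of_lipschitz_of_closedBall_sublevel_subset (hdiff y hy) hG hy hlip hr hball
  set z : ℝ → E := fun s ↦ y + s • -(η • G) with hzdef
  have hz_ball : ∀ s ∈ Icc (0 : ℝ) 1, z s ∈ closedBall y r := by
    intro s hs
    rw [mem_closedBall, dist_eq_norm]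
    simp only [hzdef, add_sub_cancel_left, norm_smul, norm_neg, Real.norm_eq_abs,
      abs_of_nonneg hs.1, abs_of_pos hη]
    calc s * (η * ‖G‖) ≤ 1 * (η * L) := by gcongr; exact hs.2
      _ ≤ r := by linarith
  have htaylor := fun t (ht : t ∈ Icc (0 : ℝ) 1) (hsub : Icc 0 t ⊆ z ⁻¹' K) ↦
    taylor_le_along_neg_gradient hU hKU hf hsmooth hη.le hηβ ht.1 fun s hs ↦ hsub hs
  -- Continuous induction: while the segment stays in `K`, `f` strictly decreases along it, so it
  -- cannot leave the sublevel set of `f y`; it never leaves the ball since `η ‖∇ f y‖ ≤ η L ≤ r`.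
  have hseg : Icc (0 : ℝ) 1 ⊆ z ⁻¹' K := by
    refine ((hK.preimage (by fun_prop)).inter isClosed_Icc)
      |>.Icc_subset_of_forall_mem_nhdsGT_of_Icc_subset (by simpa [hzdef] using hy)
      fun t ht hsub ↦ ?_
    obtain ⟨hderiv, hval⟩ := htaylor t (Ico_subset_Icc_self ht) hsub
    have hneg : fderiv ℝ f (z t) (-(η • G)) < 0 := by
      have : 0 < η * ‖G‖ ^ 2 * (1 - t) := by
        have := ht.2; have := norm_pos_iff.2 hG; have : 0 < 1 - t := by linarith
        positivity
      linarith
    have hdec :=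
      (hasDerivAt_comp_add_smul (hdiff _ (hsub ⟨ht.1, le_rfl⟩))).eventually_nhdsGT_lt hneg
    filter_upwards [hdec, Ioo_mem_nhdsGT ht.2] with s hs hs1
    refine hball _ (hz_ball s ⟨ht.1.trans hs1.1.le, hs1.2.le⟩) (hs.le.trans (hval.trans ?_))
    have : 0 ≤ η * ‖G‖ ^ 2 * t * (1 - t / 2) := by
      have := ht.1; have := ht.2; have : 0 ≤ 1 - t / 2 := by linarith
      positivity
    linarith
  have hstep := (htaylor 1 (right_mem_Icc.2 zero_le_one) hseg).2
  rw [one_smul, ← sub_eq_add_neg] at hstep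
  linarith

end Gradient

theorem le_one_div_mul_of_le_sub_mul_sq {a : ℕ → ℝ} {c : ℝ} (hc : 0 < c) (ha : ∀ k, 0 ≤ a k)
    (hrec : ∀ k, a (k + 1) ≤ a k - c * a k ^ 2) (k : ℕ) : a (k + 1) ≤ 1 / (c * (k + 1)) := by
  have hstep : ∀ k, c * a (k + 1) ≤ c * a k - (c * a k) ^ 2 := fun k ↦ by
    nlinarith [mul_le_mul_of_nonneg_left (hrec k) hc.le]
  rw [le_div_iff₀ (by positivity), ← mul_assoc, mul_comm _ c]
  induction k with
  | zero => norm_num; nlinarith [hstep 0, sq_nonneg (c * a 0 - 1 / 2)]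
  | succ k ih =>
    push_cast at ih ⊢
    set p := c * a (k + 1)
    have hp : 0 ≤ p := mul_nonneg hc.le (ha _)
    have hk : (0 : ℝ) ≤ k := k.cast_nonneg
    -- expanded, this says `(k + 2) (p - p²) ≤ 1 - p²`
    have hfact : 0 ≤ (1 - (k + 1) * p) * (1 - p) := mul_nonneg (by linarith) (by nlinarith)
    nlinarith [mul_le_mul_of_nonneg_right (hstep (k + 1)) (by positivity : (0 : ℝ) ≤ k + 2)]

theorem opN_sub_one_le_of_mem_closedBall {E ι : Type*} [SeminormedAddCommGroup E] [Fintype ι]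
    [DecidableEq ι] {Λ : E → Matrix ι ι ℝ} {L : ℝ} (hL : 0 < L)
    (hΛ : ∀ x y, opN (Λ x - Λ y) ≤ L * ‖x - y‖) {y p : E} (hy : Λ y = 1)
    (hp : p ∈ closedBall y (1 / (2 * L))) : opN (Λ p - 1) ≤ 1 / 2 :=
  calc opN (Λ p - 1) = opN (Λ p - Λ y) := by rw [hy]
    _ ≤ L * ‖p - y‖ := hΛ p y
    _ ≤ L * (1 / (2 * L)) := by gcongr; exact mem_closedBall_iff_norm.1 hp
    _ = 1 / 2 := by field_simp

theorem sub_le_two_div_of_descent_of_PL {v g ηk : ℕ → ℝ} {m α η : ℝ} (hα : 0 < α) (hη : 0 < η)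
    (hηk : ∀ k, η ≤ ηk k) (hm : ∀ k, m ≤ v k) (hdesc : ∀ k, v (k + 1) ≤ v k - ηk k / 2 * g k ^ 2)
    (hPL : ∀ k, α * (v k - m) ≤ g k) {k : ℕ} (hk : 1 ≤ k) : v k - m ≤ 2 / (α ^ 2 * η * k) := by
  have hgap : ∀ k, v (k + 1) - m ≤ (v k - m) - α ^ 2 * η / 2 * (v k - m) ^ 2 := by
    intro k
    have hsq : (α * (v k - m)) ^ 2 ≤ g k ^ 2 :=
      pow_le_pow_left₀ (mul_nonneg hα.le (sub_nonneg.2 (hm k))) (hPL k) 2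
    nlinarith [hdesc k, mul_le_mul (hηk k) hsq (sq_nonneg _) (hη.le.trans (hηk k))]
  obtain ⟨j, rfl⟩ := Nat.exists_eq_add_of_le' hk
  convert le_one_div_mul_of_le_sub_mul_sq (a := fun k ↦ v k - m) (by positivity)
    (fun k ↦ sub_nonneg.2 (hm k)) hgap j using 1
  push_cast
  field_simp

theorem stmt_5_general {d n : ℕ} (f : EuclideanSpace ℝ (Fin d) → ℝ)
    (hbdd : BddBelow (Set.range f))
    (x₀ : EuclideanSpace ℝ (Fin d))
    (Λ : EuclideanSpace ℝ (Fin d) → Matrix (Fin n) (Fin n) ℝ)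
    (K : Set (EuclideanSpace ℝ (Fin d)))
    (hKdef : K = {x | f x ≤ f x₀ ∧ opN (Λ x - 1) ≤ 1 / 2})
    (hKclosed : IsClosed K)
    (Lcond : ℝ) (hLcond : 0 < Lcond)
    (hΛlip : ∀ x y, opN (Λ x - Λ y) ≤ Lcond * ‖x - y‖)
    (U : Set (EuclideanSpace ℝ (Fin d))) (hUopen : IsOpen U) (hKU : K ⊆ U)
    (hfC2 : ContDiffOn ℝ 2 f U)
    (β : ℝ) (hβ : 0 < β)
    (hsmooth : ∀ x ∈ K, ∀ v : EuclideanSpace ℝ (Fin d),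
      fderiv ℝ (fderiv ℝ f) x v v ≤ β * ‖v‖ ^ 2)
    (Lf : ℝ) (hLf : 0 < Lf)
    (hflip : ∀ x ∈ K, ∀ y ∈ K, |f x - f y| ≤ Lf * ‖x - y‖)
    (α : ℝ) (hα : 0 < α)
    (hPL : ∀ x ∈ K, α * (f x - sInf (Set.range f)) ≤ ‖gradient f x‖)
    (ηk : ℕ → ℝ) (η : ℝ) (hη0 : 0 < η) (hηlb : ∀ k, η ≤ ηk k)
    (hηub : ∀ k, ηk k ≤ min (1 / β) (1 / (2 * Lf * Lcond)))
    (x xt : ℕ → EuclideanSpace ℝ (Fin d)) (hx0 : x 0 = x₀)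
    (hrecond : ∀ k : ℕ, Λ (xt k) = 1 ∧ f (xt k) = f (x k))
    (hiter : ∀ k : ℕ, x (k + 1) = xt k - ηk k • gradient f (xt k)) :
    ∀ k : ℕ, 1 ≤ k → f (x k) - sInf (Set.range f) ≤ 2 / (α ^ 2 * η * k) := by
  have hball : ∀ y, Λ y = 1 → f y ≤ f x₀ →
      ∀ p ∈ closedBall y (1 / (2 * Lcond)), f p ≤ f y → p ∈ K := fun y hy hfy p hp hfp ↦
    hKdef ▸ ⟨hfp.trans hfy, opN_sub_one_le_of_mem_closedBall hLcond hΛlip hy hp⟩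
  have hxtK : ∀ k, f (x k) ≤ f x₀ → xt k ∈ K := fun k hk ↦
    hball _ (hrecond k).1 ((hrecond k).2 ▸ hk) _ (mem_closedBall_self (by positivity)) le_rfl
  have hdesc : ∀ k, f (x k) ≤ f x₀ →
      f (x (k + 1)) ≤ f (x k) - ηk k / 2 * ‖∇ f (xt k)‖ ^ 2 := by
    intro k hk
    have hηβ : ηk k * β ≤ 1 := (le_div_iff₀ hβ).1 ((hηub k).trans (min_le_left _ _))
    have hηL : ηk k * Lf ≤ 1 / (2 * Lcond) :=
      calc ηk k * Lf ≤ 1 / (2 * Lf * Lcond) * Lf := by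
            gcongr; exact (hηub k).trans (min_le_right _ _)
        _ = 1 / (2 * Lcond) := by field_simp
    rw [hiter k, ← (hrecond k).2]
    exact gradient_step_le hKclosed hUopen hKU hfC2 hsmooth hflip (hxtK k hk) (by positivity)
      (hball _ (hrecond k).1 ((hrecond k).2 ▸ hk)) (hη0.trans_le (hηlb k)) hηβ hηL
  have hsub : ∀ k, f (x k) ≤ f x₀ := by
    intro k
    induction k with
    | zero => simp [hx0]
    | succ k ih =>
      have : 0 ≤ ηk k / 2 * ‖∇ f (xt k)‖ ^ 2 := by
        have := hη0.trans_le (hηlb k); positivity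
      linarith [hdesc k ih]
  refine fun k hk ↦ sub_le_two_div_of_descent_of_PL hα hη0 hηlb (fun k ↦ csInf_le hbdd ⟨_, rfl⟩)
    (fun k ↦ hdesc k (hsub k)) (fun k ↦ ?_) hk
  simpa only [(hrecond k).2] using hPL _ (hxtK k (hsub k))

/-- Gradient descent with reconditioning: under β-upper-smoothness,
`L_f`-Lipschitzness and the α-weak-PL condition on the closed reconditioned level set `K`,
with a Lipschitz reconditioning matrix `Λ`, the reconditioned gradient iterates converge at
rate `O(1/k)`. -/
theorem stmt_5 {d n : ℕ} (f : EuclideanSpace ℝ (Fin d) → ℝ)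
    (hbdd : BddBelow (Set.range f))
    (x₀ : EuclideanSpace ℝ (Fin d))
    (Λ : EuclideanSpace ℝ (Fin d) → Matrix (Fin n) (Fin n) ℝ)
    (hΛpsd : ∀ x, (Λ x).PosSemidef)
    (K : Set (EuclideanSpace ℝ (Fin d)))
    (hKdef : K = {x | f x ≤ f x₀ ∧ opN (Λ x - 1) ≤ 1 / 2})
    (hKclosed : IsClosed K)
    (Lcond : ℝ) (hLcond : 0 < Lcond)
    (hΛlip : ∀ x y, opN (Λ x - Λ y) ≤ Lcond * ‖x - y‖)
    (U : Set (EuclideanSpace ℝ (Fin d))) (hUopen : IsOpen U) (hKU : K ⊆ U)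
    (hfC2 : ContDiffOn ℝ 2 f U)
    (β : ℝ) (hβ : 0 < β)
    (hsmooth : ∀ x ∈ K, ∀ v : EuclideanSpace ℝ (Fin d),
      fderiv ℝ (fderiv ℝ f) x v v ≤ β * ‖v‖ ^ 2)
    (Lf : ℝ) (hLf : 0 < Lf)
    (hflip : ∀ x ∈ K, ∀ y ∈ K, |f x - f y| ≤ Lf * ‖x - y‖)
    (α : ℝ) (hα : 0 < α)
    (hPL : ∀ x ∈ K, α * (f x - sInf (Set.range f)) ≤ ‖gradient f x‖)
    (ηk : ℕ → ℝ) (η : ℝ) (hη0 : 0 < η) (hηlb : ∀ k, η ≤ ηk k)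
    (hηub : ∀ k, ηk k ≤ min (1 / β) (1 / (2 * Lf * Lcond)))
    (x xt : ℕ → EuclideanSpace ℝ (Fin d)) (hx0 : x 0 = x₀)
    (hrecond : ∀ k : ℕ, Λ (xt k) = 1 ∧ f (xt k) = f (x k))
    (hiter : ∀ k : ℕ, x (k + 1) = xt k - ηk k • gradient f (xt k)) :
    ∀ k : ℕ, 1 ≤ k → f (x k) - sInf (Set.range f) ≤ 2 / (α ^ 2 * η * k) :=
  stmt_5_general f hbdd x₀ Λ K hKdef hKclosed Lcond hLcond hΛlip U hUopen hKU hfC2 β hβ hsmooth Lf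
    hLf hflip α hα hPL ηk η hη0 hηlb hηub x xt hx0 hrecond hiter
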